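/- (Theorem 3, Longer Distance from 𝓜.) Let X, X₁ ∈ ℝ^{N×d}, let c > 0 (playing the role of sλ), suppose d_𝓜(X₁) ≤ c·d_𝓜(X), and let ρ ∈ (0,1) satisfy ρ(1/c + 1) − 1 > 0. Then the expected SkipNode output E[X₂] = (1−ρ)X₁ + ρX satisfies the lower bound d_𝓜((1−ρ)X₁ + ρX) ≥ (ρ(1/c + 1) − 1)·d_𝓜(X₁). -/

import Mathlib

open scoped BigOperators

/-- The Frobenius norm of a real `N × d` matrix. -/
noncomputable def fNorm {N d : ℕ} (X : Matrix (Fin N) (Fin d) ℝ) : ℝ :=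
  Real.sqrt (∑ i, ∑ j, (X i j) ^ 2)

/-- The distance (in Frobenius norm) from a matrix `X` to the subspace
`𝓜 = {∑ m, e m ⊗ w m | w m ∈ ℝ^d}` determined by the family `e` of vectors in `ℝ^N`. -/
noncomputable def distM {N d M : ℕ} (e : Fin M → Fin N → ℝ)
    (X : Matrix (Fin N) (Fin d) ℝ) : ℝ :=
  sInf {r : ℝ | ∃ w : Fin M → Fin d → ℝ,
    r = fNorm (X - Matrix.of fun i j => ∑ m, e m i * w m j)}

/-! `distM e` is the quotient seminorm of the Frobenius norm modulo the subspace `𝓜`, so it is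
subadditive and absolutely homogeneous. Hence, with `T = (1 - ρ) • X₁ + ρ • X`,
`ρ · d(X) = d(T - (1 - ρ) • X₁) ≤ d(T) + (1 - ρ) · d(X₁)`, and `d(X) ≥ d(X₁) / c` gives the bound. -/

theorem le_norm_one_sub_smul_add_smul {E : Type*} [SeminormedAddCommGroup E] [NormedSpace ℝ E]
    {x x₁ : E} {c ρ : ℝ} (hc : 0 < c) (hx₁ : ‖x₁‖ ≤ c * ‖x‖) (hρ0 : 0 ≤ ρ) (hρ1 : ρ ≤ 1) :
    (ρ * (1 / c + 1) - 1) * ‖x₁‖ ≤ ‖(1 - ρ) • x₁ + ρ • x‖ := by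
  have htri : ρ * ‖x‖ ≤ ‖(1 - ρ) • x₁ + ρ • x‖ + (1 - ρ) * ‖x₁‖ :=
    calc ρ * ‖x‖ = ‖((1 - ρ) • x₁ + ρ • x) - (1 - ρ) • x₁‖ := by
          rw [add_sub_cancel_left, norm_smul ρ x, Real.norm_of_nonneg hρ0]
      _ ≤ _ := (norm_sub_le _ _).trans_eq <| by
          rw [norm_smul (1 - ρ) x₁, Real.norm_of_nonneg (sub_nonneg.2 hρ1)]
  have hx : ‖x₁‖ / c ≤ ‖x‖ := (div_le_iff₀ hc).2 (by linarith)
  calc (ρ * (1 / c + 1) - 1) * ‖x₁‖ = ρ * (‖x₁‖ / c) - (1 - ρ) * ‖x₁‖ := by ring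
    _ ≤ ρ * ‖x‖ - (1 - ρ) * ‖x₁‖ := by gcongr
    _ ≤ _ := by linarith

attribute [local instance] Matrix.frobeniusSeminormedAddCommGroup Matrix.frobeniusNormedSpace

section

variable {N d M : ℕ}

theorem fNorm_eq_norm (X : Matrix (Fin N) (Fin d) ℝ) : fNorm X = ‖X‖ := by
  simp [fNorm, Matrix.frobenius_norm_def, Real.sqrt_eq_rpow]

theorem of_sum_mul_eq_transpose_mul (e : Fin M → Fin N → ℝ) (w : Fin M → Fin d → ℝ) :
    (Matrix.of fun i j => ∑ m, e m i * w m j) = (Matrix.of e).transpose * Matrix.of w := by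
  ext
  simp [Matrix.mul_apply]

/-- The subspace `𝓜 = {∑ m, e m ⊗ w m}`, written as the matrices `Eᵀ W` with `E = Matrix.of e`. -/
def subspaceM (d : ℕ) (e : Fin M → Fin N → ℝ) : Submodule ℝ (Matrix (Fin N) (Fin d) ℝ) :=
  LinearMap.range (mulLeftLinearMap (Fin d) ℝ (Matrix.of e).transpose)

theorem distM_eq_infDist (e : Fin M → Fin N → ℝ) (X : Matrix (Fin N) (Fin d) ℝ) :
    distM e X = Metric.infDist X (subspaceM d e) := by
  have hset : {r : ℝ | ∃ w : Fin M → Fin d → ℝ,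
      r = fNorm (X - Matrix.of fun i j => ∑ m, e m i * w m j)} = dist X '' (subspaceM d e) := by
    ext r
    simp only [Set.mem_ofPred_eq, Set.mem_image, SetLike.mem_coe, subspaceM, LinearMap.mem_range,
      mulLeftLinearMap_apply, fNorm_eq_norm, dist_eq_norm, eq_comm, of_sum_mul_eq_transpose_mul]
    exact ⟨fun ⟨w, h⟩ => ⟨_, ⟨Matrix.of w, rfl⟩, h⟩, fun ⟨_, ⟨y, rfl⟩, h⟩ => ⟨y, h⟩⟩
  rw [distM, hset, Metric.infDist_eq_iInf, sInf_image']

theorem distM_eq_norm_mkQ (e : Fin M → Fin N → ℝ) (X : Matrix (Fin N) (Fin d) ℝ) :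
    distM e X = ‖(subspaceM d e).mkQ X‖ := by
  rw [distM_eq_infDist]
  exact (QuotientAddGroup.norm_mk (S := (subspaceM d e).toAddSubgroup) X).symm

end

theorem skipNode_longer_distance_general {N d M : ℕ}
    (e : Fin M → Fin N → ℝ)
    (X X₁ : Matrix (Fin N) (Fin d) ℝ) (c : ℝ) (hc : 0 < c)
    (hX₁ : distM e X₁ ≤ c * distM e X)
    (ρ : ℝ) (hρ0 : 0 < ρ) (hρ1 : ρ < 1) :
    distM e ((1 - ρ) • X₁ + ρ • X) ≥ (ρ * (1 / c + 1) - 1) * distM e X₁ := by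
  simp only [distM_eq_norm_mkQ, map_add, map_smul] at hX₁ ⊢
  exact le_norm_one_sub_smul_add_smul hc hX₁ hρ0.le hρ1.le

theorem skipNode_longer_distance {N d M : ℕ} (hN : 0 < N) (hd : 0 < d)
    (hMpos : 0 < M) (hM : M < N)
    (e : Fin M → Fin N → ℝ)
    (horth : ∀ m m' : Fin M, (∑ i, e m i * e m' i) = if m = m' then 1 else 0)
    (X X₁ : Matrix (Fin N) (Fin d) ℝ) (c : ℝ) (hc : 0 < c)
    (hX₁ : distM e X₁ ≤ c * distM e X)
    (ρ : ℝ) (hρ0 : 0 < ρ) (hρ1 : ρ < 1)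
    (hcond : ρ * (1 / c + 1) - 1 > 0) :
    distM e ((1 - ρ) • X₁ + ρ • X) ≥ (ρ * (1 / c + 1) - 1) * distM e X₁ :=
  skipNode_longer_distance_general e X X₁ c hc hX₁ ρ hρ0 hρ1
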